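/- arXiv:2308.00317 — 4 statements merged into one kernel-verified Lean document; each statement's English description precedes it below -/
import Mathlib

section
/- Let F, G be CDFs of non-negative integrable random variables X, Y. Then X second-order stochastically dominates Y (i.e., L_F(p) ≥ L_G(p) for all p ∈ [0,1]) if and only if Z(p) := L_G^{-1}(L_F(p)) ≥ p for all p ∈ [0,1]. -/
open MeasureTheory Set

/-- The left-continuous quantile function `F⁻¹(t) = inf {x : F x ≥ t}`. -/
noncomputable def quantile (F : ℝ → ℝ) (t : ℝ) : ℝ := sInf {x : ℝ | t ≤ F x}

/-- The unscaled Lorenz curve `L_F(p) = ∫₀ᵖ F⁻¹(t) dt`. -/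
noncomputable def lorenz (F : ℝ → ℝ) (p : ℝ) : ℝ := ∫ t in (0:ℝ)..p, quantile F t

/-- The generalized inverse `L⁻¹(y) = inf {p : L(p) > y}`, where `L` is viewed as
extended by `+∞` beyond `1` (so the inverse equals `1` when `y ≥ L(1)`). -/
noncomputable def lorenzInv (F : ℝ → ℝ) (y : ℝ) : ℝ :=
  sInf ({p : ℝ | p ∈ Icc (0:ℝ) 1 ∧ y < lorenz F p} ∪ {1})

/-- The Lorenz P-P plot `Z = L_G⁻¹ ∘ L_F`. -/
noncomputable def LPP (F G : ℝ → ℝ) (p : ℝ) : ℝ := lorenzInv G (lorenz F p)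

lemma cdf_nonneg {F : ℝ → ℝ} (hF : Monotone F) (hFnn : ∀ x < (0:ℝ), F x = 0) (x : ℝ) :
    0 ≤ F x := by
  rcases lt_or_ge x 0 with h | h
  · exact (hFnn x h).ge
  · have h1 : F (-1) = 0 := hFnn (-1) (by norm_num)
    have := hF (show (-1:ℝ) ≤ x by linarith)
    linarith

lemma quantile_nonneg {F : ℝ → ℝ} (hF : Monotone F) (hFnn : ∀ x < (0:ℝ), F x = 0) (t : ℝ) :
    0 ≤ quantile F t := by
  rcases le_or_gt t 0 with h | h
  · have hset : {x : ℝ | t ≤ F x} = univ :=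
      eq_univ_of_forall fun x => le_trans h (cdf_nonneg hF hFnn x)
    rw [quantile, hset, Real.sInf_of_not_bddBelow not_bddBelow_univ]
  · exact Real.sInf_nonneg (fun x hx => by
      by_contra hneg
      push_neg at hneg
      have hx' : t ≤ F x := hx
      rw [hFnn x hneg] at hx'
      exact absurd hx' (not_le.mpr h))

lemma lorenz_mono {F : ℝ → ℝ} (hF : Monotone F) (hFnn : ∀ x < (0:ℝ), F x = 0)
    (hFint : IntervalIntegrable (quantile F) volume 0 1)
    {a b : ℝ} (ha : 0 ≤ a) (hab : a ≤ b) (hb : b ≤ 1) :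
    lorenz F a ≤ lorenz F b := by
  have hb0 : 0 ≤ b := le_trans ha hab
  have h0a : IntervalIntegrable (quantile F) volume 0 a :=
    hFint.mono_set (by
      rw [uIcc_of_le ha, uIcc_of_le (by norm_num : (0:ℝ) ≤ 1)]
      exact Icc_subset_Icc le_rfl (le_trans hab hb))
  have hab' : IntervalIntegrable (quantile F) volume a b :=
    hFint.mono_set (by
      rw [uIcc_of_le hab, uIcc_of_le (by norm_num : (0:ℝ) ≤ 1)]
      exact Icc_subset_Icc ha hb)
  have hsum : (∫ t in (0:ℝ)..a, quantile F t) + ∫ t in a..b, quantile F t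
      = ∫ t in (0:ℝ)..b, quantile F t :=
    intervalIntegral.integral_add_adjacent_intervals h0a hab'
  have hnn : 0 ≤ ∫ t in a..b, quantile F t :=
    intervalIntegral.integral_nonneg hab (fun u _ => quantile_nonneg hF hFnn u)
  rw [lorenz, lorenz, ← hsum]
  linarith

lemma lorenz_continuousOn {F : ℝ → ℝ}
    (hFint : IntervalIntegrable (quantile F) volume 0 1) :
    ContinuousOn (lorenz F) (Icc (0:ℝ) 1) := by
  have h : IntegrableOn (quantile F) (uIcc (0:ℝ) 1) volume := by
    rwa [intervalIntegrable_iff'] at hFint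
  have := intervalIntegral.continuousOn_primitive_interval h
  rwa [uIcc_of_le (by norm_num : (0:ℝ) ≤ 1)] at this

/-- `X` second-order stochastically dominates `Y` (i.e. `L_F ≥ L_G` on `[0,1]`)
iff the Lorenz P-P plot satisfies `Z(p) ≥ p` for all `p ∈ [0,1]`. -/
theorem stmt1 (F G : ℝ → ℝ)
    (hF : Monotone F) (hG : Monotone G)
    (hFnn : ∀ x < (0:ℝ), F x = 0) (hGnn : ∀ x < (0:ℝ), G x = 0)
    (hFint : IntervalIntegrable (quantile F) volume 0 1)
    (hGint : IntervalIntegrable (quantile G) volume 0 1) :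
    (∀ p ∈ Icc (0:ℝ) 1, lorenz G p ≤ lorenz F p) ↔
      (∀ p ∈ Icc (0:ℝ) 1, p ≤ LPP F G p) := by
  constructor
  · intro hdom p hp
    rw [LPP, lorenzInv]
    refine le_csInf ⟨1, ?_⟩ ?_
    · right; rfl
    rintro b (⟨hb, hlt⟩ | rfl)
    · by_contra hbp
      push_neg at hbp
      have h1 : lorenz G b ≤ lorenz F b := hdom b hb
      have h2 : lorenz F b ≤ lorenz F p :=
        lorenz_mono hF hFnn hFint hb.1 hbp.le hp.2
      linarith
    · exact hp.2
  · intro hZ p hp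
    by_contra hlt
    push_neg at hlt
    have hp0 : p ≠ 0 := by
      rintro rfl
      simp only [lorenz, intervalIntegral.integral_same] at hlt
      exact lt_irrefl _ hlt
    have hppos : 0 < p := lt_of_le_of_ne hp.1 (Ne.symm hp0)
    -- continuity of lorenz G at p within Icc 0 1
    have hc : ContinuousWithinAt (lorenz G) (Icc (0:ℝ) 1) p :=
      (lorenz_continuousOn hGint) p hp
    have hev : ∀ᶠ q in nhdsWithin p (Icc (0:ℝ) 1), lorenz F p < lorenz G q :=
      hc.eventually (eventually_gt_nhds hlt)
    have hsub : Ico (0:ℝ) p ⊆ Icc (0:ℝ) 1 :=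
      fun x hx => ⟨hx.1, le_trans hx.2.le hp.2⟩
    have hev2 : ∀ᶠ q in nhdsWithin p (Ico (0:ℝ) p), lorenz F p < lorenz G q :=
      hev.filter_mono (nhdsWithin_mono p hsub)
    have hne : (nhdsWithin p (Ico (0:ℝ) p)).NeBot := by
      rw [← mem_closure_iff_nhdsWithin_neBot, closure_Ico (ne_of_lt hppos)]
      exact ⟨hp.1, le_rfl⟩
    obtain ⟨q, hqmem, hqlt⟩ := (hev2.and (eventually_mem_nhdsWithin)).exists
    -- hqmem : lorenz F p < lorenz G q ∧ q ∈ Ico 0 p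
    have hq1 : q ∈ Icc (0:ℝ) 1 := hsub hqlt
    have hmemS : q ∈ ({r : ℝ | r ∈ Icc (0:ℝ) 1 ∧ lorenz F p < lorenz G r} ∪ {1}) :=
      Or.inl ⟨hq1, hqmem⟩
    have hbdd : BddBelow ({r : ℝ | r ∈ Icc (0:ℝ) 1 ∧ lorenz F p < lorenz G r} ∪ {1}) := by
      refine ⟨0, ?_⟩
      rintro r (⟨hr, _⟩ | rfl)
      · exact hr.1
      · norm_num
    have hle : LPP F G p ≤ q := csInf_le hbdd hmemS
    have hZp := hZ p hp
    have : p ≤ q := le_trans hZp hle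
    exact absurd this (not_le.mpr hqlt.2)
end

section
/- If μ_G < μ_F, then letting ν = min(1, L_F^{-1}(μ_G)), we have ν < 1 and the LPP satisfies Z(p) = L_G^{-1}(L_F(p)) = 1 for all p ∈ (ν, 1]. -/
open MeasureTheory Set

lemma quantile_nonneg_aux (F : ℝ → ℝ) (hF : Monotone F) (hFnn : ∀ x < (0:ℝ), F x = 0)
    {t : ℝ} (ht : 0 ≤ t) : 0 ≤ quantile F t := by
  rcases eq_or_lt_of_le ht with h | h
  · have hset : {x : ℝ | t ≤ F x} = univ := by
      ext x
      simp only [mem_setOf_eq, mem_univ, iff_true, ← h]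
      calc (0:ℝ) = F (min x 0 - 1) := (hFnn _ (by linarith [min_le_right x 0])).symm
        _ ≤ F x := hF (by linarith [min_le_left x 0])
    rw [quantile, hset, Real.sInf_of_not_bddBelow (by simp)]
  · apply Real.sInf_nonneg
    intro x hx
    by_contra hxneg
    push_neg at hxneg
    have := hFnn x hxneg
    simp only [mem_setOf_eq] at hx
    linarith

lemma lorenz_mono_aux (F : ℝ → ℝ) (hF : Monotone F) (hFnn : ∀ x < (0:ℝ), F x = 0)
    (hFint : IntervalIntegrable (quantile F) volume 0 1)
    {a b : ℝ} (ha : 0 ≤ a) (hab : a ≤ b) (hb : b ≤ 1) : lorenz F a ≤ lorenz F b := by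
  have h1 : IntervalIntegrable (quantile F) volume 0 a :=
    hFint.mono_set (by rw [uIcc_of_le ha, uIcc_of_le (by norm_num)]; exact Icc_subset_Icc le_rfl (hab.trans hb))
  have h2 : IntervalIntegrable (quantile F) volume a b :=
    hFint.mono_set (by rw [uIcc_of_le hab, uIcc_of_le (by norm_num)]; exact Icc_subset_Icc ha hb)
  have hsum := intervalIntegral.integral_add_adjacent_intervals h1 h2
  have hnn : 0 ≤ ∫ t in a..b, quantile F t :=
    intervalIntegral.integral_nonneg hab fun u hu =>
      quantile_nonneg_aux F hF hFnn (ha.trans hu.1)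
  unfold lorenz
  rw [← hsum]
  linarith

/-- If `μ_G < μ_F` then `ν = min 1 (L_F⁻¹(μ_G)) < 1` and the LPP equals `1` on `(ν, 1]`. -/
theorem stmt3 (F G : ℝ → ℝ)
    (hF : Monotone F) (hG : Monotone G)
    (hFnn : ∀ x < (0:ℝ), F x = 0) (hGnn : ∀ x < (0:ℝ), G x = 0)
    (hFint : IntervalIntegrable (quantile F) volume 0 1)
    (hGint : IntervalIntegrable (quantile G) volume 0 1)
    (hμ : lorenz G 1 < lorenz F 1) :
    min 1 (lorenzInv F (lorenz G 1)) < 1 ∧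
    ∀ p, min 1 (lorenzInv F (lorenz G 1)) < p → p ≤ 1 → LPP F G p = 1 := by
  set μG := lorenz G 1 with hμG
  set S : Set ℝ := {p : ℝ | p ∈ Icc (0:ℝ) 1 ∧ μG < lorenz F p} ∪ {1} with hS
  have hSne : S.Nonempty := ⟨1, Or.inr rfl⟩
  have hSbdd : BddBelow S := by
    refine ⟨0, fun x hx => ?_⟩
    rcases hx with ⟨⟨h0, _⟩, _⟩ | h1
    · exact h0
    · simp only [mem_singleton_iff] at h1; simp [h1]
  -- continuity gives a point p0 < 1 with μG < lorenz F p0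
  have hcont : ContinuousOn (lorenz F) (Icc (0:ℝ) 1) := by
    have := intervalIntegral.continuousOn_primitive_interval'
      (μ := volume) (b₁ := (0:ℝ)) (b₂ := 1) hFint left_mem_uIcc
    rwa [uIcc_of_le (by norm_num : (0:ℝ) ≤ 1)] at this
  have htend : Filter.Tendsto (lorenz F) (nhdsWithin 1 (Ioo (0:ℝ) 1)) (nhds (lorenz F 1)) :=
    ((hcont 1 (by norm_num)).mono Ioo_subset_Icc_self).tendsto
  have hne : Filter.NeBot (nhdsWithin 1 (Ioo (0:ℝ) 1)) :=
    right_nhdsWithin_Ioo_neBot (by norm_num)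
  have hev : ∀ᶠ p in nhdsWithin 1 (Ioo (0:ℝ) 1), μG < lorenz F p :=
    htend.eventually (eventually_gt_nhds hμ)
  obtain ⟨p0, hp0gt, hp0mem⟩ := (hev.and (eventually_mem_nhdsWithin)).exists
  have hp0S : p0 ∈ S := Or.inl ⟨⟨hp0mem.1.le, hp0mem.2.le⟩, hp0gt⟩
  have hinf_le : sInf S ≤ p0 := csInf_le hSbdd hp0S
  have hinf_le1 : sInf S ≤ 1 := csInf_le hSbdd (Or.inr rfl)
  have hν : min 1 (lorenzInv F μG) = sInf S := by
    rw [lorenzInv, ← hS, min_eq_right hinf_le1]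
  constructor
  · rw [hν]; exact lt_of_le_of_lt hinf_le hp0mem.2
  · intro p hp hp1
    rw [hν] at hp
    obtain ⟨q, hqS, hqp⟩ := exists_lt_of_csInf_lt hSne hp
    have hq : q ∈ Icc (0:ℝ) 1 ∧ μG < lorenz F q := by
      rcases hqS with h | h
      · exact h
      · simp only [mem_singleton_iff] at h; exfalso; rw [h] at hqp; linarith
    have hkey : μG ≤ lorenz F p :=
      le_trans hq.2.le (lorenz_mono_aux F hF hFnn hFint hq.1.1 hqp.le hp1)
    -- now lorenzInv G (lorenz F p) = 1
    rw [LPP, lorenzInv]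
    have hempty : {q : ℝ | q ∈ Icc (0:ℝ) 1 ∧ lorenz F p < lorenz G q} = ∅ := by
      ext q
      simp only [mem_setOf_eq, mem_empty_iff_false, iff_false, not_and]
      intro hq1
      have : lorenz G q ≤ μG := lorenz_mono_aux G hG hGnn hGint hq1.1 hq1.2 le_rfl
      push_neg
      linarith
    rw [hempty, empty_union, csInf_singleton]
end

section
/- If u₁ is more convex than u₂ (i.e., u₁ ∘ u₂^{-1} is convex) and u₁(X) ≥₂ u₁(Y), then u₂(X) ≥₂ u₂(Y). That is, u-transformed stochastic dominance gets weaker as u becomes less convex. -/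
open MeasureTheory Set

/-- Second-order stochastic dominance of `A` over `B`: `E[g(A)] ≥ E[g(B)]` for all
increasing concave `g` (for which the expectations exist). -/
def SSD {Ω : Type*} [MeasurableSpace Ω] (μ : Measure Ω) (A B : Ω → ℝ) : Prop :=
  ∀ g : ℝ → ℝ, Monotone g → ConcaveOn ℝ Set.univ g →
    Integrable (fun ω => g (A ω)) μ → Integrable (fun ω => g (B ω)) μ →
    (∫ ω, g (B ω) ∂μ) ≤ ∫ ω, g (A ω) ∂μ

/-- `u` is increasing and absolutely continuous on `[0,∞)`: it is monotone and is
the integral of a (non-negative) density `u'`. -/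
def IncAC (u : ℝ → ℝ) : Prop :=
  Monotone u ∧ ∃ u' : ℝ → ℝ, (∀ t, 0 ≤ u' t) ∧
    ∀ x, 0 ≤ x → u x = u 0 + ∫ t in (0:ℝ)..x, u' t

/-- If `u₁` is more convex than `u₂` (i.e. `u₁ ∘ u₂⁻¹` is convex, equivalently
`u₂ = h ∘ u₁` with `h` increasing concave), then `u₁`-transformed stochastic dominance
implies `u₂`-transformed stochastic dominance. -/
theorem stmt15 {Ω : Type*} [MeasurableSpace Ω] (μ : Measure Ω) [IsProbabilityMeasure μ]
    (X Y : Ω → ℝ) (hX : Measurable X) (hY : Measurable Y)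
    (hXnn : ∀ ω, 0 ≤ X ω) (hYnn : ∀ ω, 0 ≤ Y ω)
    (u₁ u₂ : ℝ → ℝ) (hu₁ : IncAC u₁) (hu₂ : IncAC u₂)
    (hconv : ∃ h : ℝ → ℝ, Monotone h ∧ ConcaveOn ℝ Set.univ h ∧ ∀ x, u₂ x = h (u₁ x))
    (hdom : SSD μ (fun ω => u₁ (X ω)) (fun ω => u₁ (Y ω))) :
    SSD μ (fun ω => u₂ (X ω)) (fun ω => u₂ (Y ω)) := by
  obtain ⟨h, hhm, hhc, heq⟩ := hconv
  intro g hgm hgc hiX hiY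
  have hcomp : ConcaveOn ℝ Set.univ (fun x => g (h x)) := by
    refine ⟨convex_univ, fun x _ y _ a b ha hb hab => ?_⟩
    calc a • g (h x) + b • g (h y)
        ≤ g (a • h x + b • h y) := hgc.2 (mem_univ _) (mem_univ _) ha hb hab
      _ ≤ g (h (a • x + b • y)) := hgm (hhc.2 (mem_univ _) (mem_univ _) ha hb hab)
  have := hdom (fun x => g (h x)) (hgm.comp hhm) hcomp
    (by simpa [heq] using hiX) (by simpa [heq] using hiY)
  simpa [heq] using this
end

section
/- X first-order stochastically dominates Y if and only if u(X) ≥₂ u(Y) for every increasing absolutely continuous function u on [0,∞). -/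
open MeasureTheory Set

lemma helper_lt {Ω : Type*} [MeasurableSpace Ω] (μ : Measure Ω) (A B : Ω → ℝ)
    (h : ∀ t, μ {ω | A ω ≤ t} ≤ μ {ω | B ω ≤ t}) (t : ℝ) :
    μ {ω | A ω < t} ≤ μ {ω | B ω < t} := by
  have hmonoA : Monotone (fun n : ℕ => {ω | A ω ≤ t - 1/((n:ℝ)+1)}) := by
    intro m n hmn ω hω
    simp only [mem_setOf_eq] at *
    have h1 : (1:ℝ)/((n:ℝ)+1) ≤ 1/((m:ℝ)+1) := by
      apply one_div_le_one_div_of_le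
      · positivity
      · exact_mod_cast by exact_mod_cast add_le_add_left (Nat.cast_le.mpr hmn) 1
    linarith
  have hset : {ω | A ω < t} = ⋃ n : ℕ, {ω | A ω ≤ t - 1/((n:ℝ)+1)} := by
    ext ω
    simp only [mem_setOf_eq, mem_iUnion]
    constructor
    · intro hlt
      obtain ⟨n, hn⟩ := exists_nat_one_div_lt (show (0:ℝ) < t - A ω by linarith)
      exact ⟨n, by linarith⟩
    · rintro ⟨n, hn⟩
      have : (0:ℝ) < 1/((n:ℝ)+1) := by positivity
      linarith
  rw [hset, (hmonoA.directed_le).measure_iUnion]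
  refine iSup_le fun n => (h _).trans (measure_mono fun ω hω => ?_)
  have : (0:ℝ) < 1/((n:ℝ)+1) := by positivity
  simp only [mem_setOf_eq] at *
  linarith

lemma helper_key {Ω : Type*} [MeasurableSpace Ω] (μ : Measure Ω) [IsProbabilityMeasure μ]
    (A B : Ω → ℝ) (hA : Measurable A) (hB : Measurable B)
    (hAi : Integrable A μ) (hBi : Integrable B μ)
    (h : ∀ t, μ {ω | A ω ≤ t} ≤ μ {ω | B ω ≤ t}) :
    ∫ ω, B ω ∂μ ≤ ∫ ω, A ω ∂μ := by
  have h1 : ∀ t : ℝ, μ {ω | t < B ω} ≤ μ {ω | t < A ω} := by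
    intro t
    have eA : {ω | t < A ω} = {ω | A ω ≤ t}ᶜ := by ext ω; simp [not_le]
    have eB : {ω | t < B ω} = {ω | B ω ≤ t}ᶜ := by ext ω; simp [not_le]
    rw [eA, eB, measure_compl (measurableSet_le hB measurable_const) (measure_ne_top μ _),
      measure_compl (measurableSet_le hA measurable_const) (measure_ne_top μ _)]
    exact tsub_le_tsub_left (h t) _
  have h2 := helper_lt μ A B h
  have ofReal_max : ∀ y : ℝ, ENNReal.ofReal y = ENNReal.ofReal (max y 0) := by
    intro y
    rcases le_total y 0 with hy | hy
    · rw [ENNReal.ofReal_of_nonpos hy, max_eq_right hy, ENNReal.ofReal_zero]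
    · rw [max_eq_left hy]
  have layercake : ∀ C : Ω → ℝ, Measurable C →
      ∫⁻ ω, ENNReal.ofReal (C ω) ∂μ = ∫⁻ t in Ioi (0:ℝ), μ {a | t < max (C a) 0} := by
    intro C hC
    calc ∫⁻ ω, ENNReal.ofReal (C ω) ∂μ = ∫⁻ ω, ENNReal.ofReal (max (C ω) 0) ∂μ :=
          lintegral_congr fun ω => ofReal_max _
      _ = ∫⁻ t in Ioi (0:ℝ), μ {a | t < max (C a) 0} :=
          lintegral_eq_lintegral_meas_lt μ (ae_of_all _ fun ω => le_max_right _ _)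
            (hC.max measurable_const).aemeasurable
  have setmax : ∀ (C : Ω → ℝ) (t : ℝ), 0 ≤ t → {a | t < max (C a) 0} = {a | t < C a} := by
    intro C t ht
    ext a
    simp only [mem_setOf_eq, lt_max_iff]
    constructor
    · rintro (h | h)
      · exact h
      · linarith
    · exact Or.inl
  have hpos : ∫⁻ ω, ENNReal.ofReal (B ω) ∂μ ≤ ∫⁻ ω, ENNReal.ofReal (A ω) ∂μ := by
    rw [layercake A hA, layercake B hB]
    refine lintegral_mono fun t => ?_
    rcases le_or_gt 0 t with ht | ht
    · rw [setmax A t ht, setmax B t ht]; exact h1 t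
    · have : ∀ C : Ω → ℝ, {a | t < max (C a) 0} = univ := by
        intro C; ext a; simp only [mem_setOf_eq, mem_univ, iff_true, lt_max_iff]
        exact Or.inr ht
      rw [this A, this B]
  have hneg : ∫⁻ ω, ENNReal.ofReal (-A ω) ∂μ ≤ ∫⁻ ω, ENNReal.ofReal (-B ω) ∂μ := by
    rw [layercake (fun ω => -A ω) (by exact hA.neg), layercake (fun ω => -B ω) (by exact hB.neg)]
    refine lintegral_mono fun t => ?_
    rcases le_or_gt 0 t with ht | ht
    · rw [setmax _ t ht, setmax _ t ht]
      have eA : {a | t < -A a} = {ω | A ω < -t} := by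
        ext a; simp only [mem_setOf_eq]; constructor <;> intro <;> linarith
      have eB : {a | t < -B a} = {ω | B ω < -t} := by
        ext a; simp only [mem_setOf_eq]; constructor <;> intro <;> linarith
      rw [eA, eB]; exact h2 (-t)
    · have : ∀ C : Ω → ℝ, {a | t < max (-C a) 0} = univ := by
        intro C; ext a; simp only [mem_setOf_eq, mem_univ, iff_true, lt_max_iff]
        exact Or.inr ht
      rw [this A, this B]
  have fin : ∀ C : Ω → ℝ, Integrable C μ → ∫⁻ ω, ENNReal.ofReal (C ω) ∂μ ≠ ⊤ := by
    intro C hC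
    refine ne_top_of_le_ne_top hC.2.ne ?_
    refine lintegral_mono fun ω => ?_
    rw [Real.enorm_eq_ofReal_abs]
    exact ENNReal.ofReal_le_ofReal (le_abs_self _)
  have finneg : ∀ C : Ω → ℝ, Integrable C μ → ∫⁻ ω, ENNReal.ofReal (-C ω) ∂μ ≠ ⊤ := by
    intro C hC
    refine ne_top_of_le_ne_top hC.2.ne ?_
    refine lintegral_mono fun ω => ?_
    rw [Real.enorm_eq_ofReal_abs]
    exact ENNReal.ofReal_le_ofReal (neg_le_abs _)
  rw [integral_eq_lintegral_pos_part_sub_lintegral_neg_part hAi,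
    integral_eq_lintegral_pos_part_sub_lintegral_neg_part hBi]
  have t1 := ENNReal.toReal_mono (fin A hAi) hpos
  have t2 := ENNReal.toReal_mono (finneg B hBi) hneg
  linarith

lemma helper_comp {Ω : Type*} [MeasurableSpace Ω] (μ : Measure Ω) (X Y : Ω → ℝ)
    (hF : ∀ x, μ {ω | X ω ≤ x} ≤ μ {ω | Y ω ≤ x}) (φ : ℝ → ℝ) (hφ : Monotone φ) (t : ℝ) :
    μ {ω | φ (X ω) ≤ t} ≤ μ {ω | φ (Y ω) ≤ t} := by
  set S : Set ℝ := {s | φ s ≤ t} with hS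
  have hlower : ∀ {a b : ℝ}, a ≤ b → b ∈ S → a ∈ S := fun hab hb => le_trans (hφ hab) hb
  have hXS : {ω | φ (X ω) ≤ t} = X ⁻¹' S := rfl
  have hYS : {ω | φ (Y ω) ≤ t} = Y ⁻¹' S := rfl
  rw [hXS, hYS]
  by_cases hne : S.Nonempty
  · by_cases hU : S = univ
    · rw [hU]; simp
    · obtain ⟨a, ha⟩ : ∃ a, a ∉ S := by
        by_contra hc
        push_neg at hc
        exact hU (eq_univ_of_forall hc)
      have hbdd : BddAbove S := ⟨a, fun s hs => le_of_not_gt fun hlt => ha (hlower hlt.le hs)⟩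
      set c := sSup S with hc
      by_cases hcS : c ∈ S
      · have : S = Iic c := by
          apply Subset.antisymm
          · exact fun s hs => le_csSup hbdd hs
          · exact fun s hs => hlower hs hcS
        rw [this]
        exact hF c
      · have : S = Iio c := by
          apply Subset.antisymm
          · intro s hs
            exact lt_of_le_of_ne (le_csSup hbdd hs) (fun he => hcS (by rwa [he] at hs))
          · intro s hs
            obtain ⟨b, hb, hsb⟩ := exists_lt_of_lt_csSup hne hs
            exact hlower hsb.le hb
        rw [this]
        exact helper_lt μ X Y hF c
  · rw [not_nonempty_iff_eq_empty] at hne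
    rw [hne]
    simp

/-- The clamp function is `IncAC`. -/
lemma helper_clamp_IncAC (x m : ℝ) (hx : 0 ≤ x) (hm : 0 < m) :
    IncAC (fun s => min (max (m * (s - x)) 0) 1) := by
  constructor
  · intro a b hab
    have : m * (a - x) ≤ m * (b - x) := by nlinarith
    exact min_le_min (max_le_max this le_rfl) le_rfl
  · refine ⟨(Ioo x (x + 1/m)).indicator (fun _ => m), fun t => indicator_nonneg (fun _ _ => hm.le) t, ?_⟩
    intro s hs
    have hu0 : min (max (m * ((0:ℝ) - x)) 0) 1 = 0 := by
      have : m * ((0:ℝ) - x) ≤ 0 := by nlinarith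
      rw [max_eq_right this, min_eq_left zero_le_one]
    beta_reduce
    rw [hu0, zero_add, intervalIntegral.integral_of_le hs,
      setIntegral_indicator measurableSet_Ioo, setIntegral_const, smul_eq_mul]
    rcases le_or_gt s x with hsx | hsx
    · have hempty : Ioc 0 s ∩ Ioo x (x + 1/m) = ∅ := by
        ext t
        simp only [mem_inter_iff, mem_Ioc, mem_Ioo, mem_empty_iff_false, iff_false]
        rintro ⟨⟨_, h2⟩, h3, _⟩
        linarith
      have : m * (s - x) ≤ 0 := by nlinarith
      rw [hempty, max_eq_right this, min_eq_left zero_le_one]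
      simp
    · rcases lt_or_ge s (x + 1/m) with hs2 | hs2
      · have heq : Ioc 0 s ∩ Ioo x (x + 1/m) = Ioc x s := by
          ext t
          simp only [mem_inter_iff, mem_Ioc, mem_Ioo]
          constructor
          · rintro ⟨⟨_, h2⟩, h3, _⟩; exact ⟨h3, h2⟩
          · rintro ⟨h1, h2⟩
            exact ⟨⟨lt_of_le_of_lt hx h1, h2⟩, h1, lt_of_le_of_lt h2 hs2⟩
        have h01 : 0 ≤ m * (s - x) := by nlinarith
        have h11 : m * (s - x) ≤ 1 := by
          have : s - x ≤ 1/m := by linarith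
          calc m * (s - x) ≤ m * (1/m) := by nlinarith
            _ = 1 := by field_simp
        rw [heq, measureReal_def, Real.volume_Ioc, max_eq_left h01, min_eq_left h11,
          ENNReal.toReal_ofReal (by linarith)]
        ring
      · have heq : Ioc 0 s ∩ Ioo x (x + 1/m) = Ioo x (x + 1/m) := by
          ext t
          simp only [mem_inter_iff, mem_Ioc, mem_Ioo]
          constructor
          · rintro ⟨_, h⟩; exact h
          · rintro ⟨h1, h2⟩
            exact ⟨⟨lt_of_le_of_lt hx h1, le_trans h2.le hs2⟩, h1, h2⟩
        have h1m : (0:ℝ) < 1/m := by positivity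
        have h01 : (1:ℝ) ≤ m * (s - x) := by
          have : 1/m ≤ s - x := by linarith
          calc (1:ℝ) = m * (1/m) := by field_simp
            _ ≤ m * (s - x) := by nlinarith
        have hmax : max (m * (s - x)) 0 = m * (s - x) := max_eq_left (by linarith)
        rw [heq, measureReal_def, Real.volume_Ioo, hmax, min_eq_right h01,
          show x + 1/m - x = 1/m by ring, ENNReal.toReal_ofReal h1m.le]
        field_simp

/-- `X` first-order stochastically dominates `Y` (i.e. `F(x) ≤ G(x)` for all `x`)
iff `u(X) ≥₂ u(Y)` for every increasing absolutely continuous `u` on `[0,∞)`. -/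
theorem stmt16 {Ω : Type*} [MeasurableSpace Ω] (μ : Measure Ω) [IsProbabilityMeasure μ]
    (X Y : Ω → ℝ) (hX : Measurable X) (hY : Measurable Y)
    (hXnn : ∀ ω, 0 ≤ X ω) (hYnn : ∀ ω, 0 ≤ Y ω)
    (hXint : Integrable X μ) (hYint : Integrable Y μ) :
    (∀ x : ℝ, μ {ω | X ω ≤ x} ≤ μ {ω | Y ω ≤ x}) ↔
      ∀ u : ℝ → ℝ, IncAC u → SSD μ (fun ω => u (X ω)) (fun ω => u (Y ω)) := by
  constructor
  · intro hF u hu g hg hgc hIA hIB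
    have hφ : Monotone (g ∘ u) := hg.comp hu.1
    exact helper_key μ (fun ω => g (u (X ω))) (fun ω => g (u (Y ω)))
      (hφ.measurable.comp hX) (hφ.measurable.comp hY) hIA hIB
      (fun t => helper_comp μ X Y hF (g ∘ u) hφ t)
  · intro hS x
    rcases lt_or_ge x 0 with hx | hx
    · have : {ω | X ω ≤ x} = ∅ := by
        ext ω
        simp only [mem_setOf_eq, mem_empty_iff_false, iff_false, not_le]
        exact lt_of_lt_of_le hx (hXnn ω)
      rw [this]
      simp
    have key : ∀ n : ℕ, μ {ω | x + 1/((n:ℝ)+1) ≤ Y ω} ≤ μ {ω | x < X ω} := by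
      intro n
      set m : ℝ := (n:ℝ)+1 with hmdef
      have hm : (0:ℝ) < m := by positivity
      set u : ℝ → ℝ := fun s => min (max (m * (s - x)) 0) 1 with hudef
      have hu : IncAC u := helper_clamp_IncAC x m hx hm
      have hu01 : ∀ s, 0 ≤ u s ∧ u s ≤ 1 := by
        intro s
        refine ⟨le_min (le_max_right _ _) zero_le_one, min_le_right _ _⟩
      have hintX : Integrable (fun ω => u (X ω)) μ := by
        refine Integrable.mono' (integrable_const 1)
          ((hu.1.measurable.comp hX).aestronglyMeasurable) (ae_of_all _ fun ω => ?_)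
        rw [Real.norm_eq_abs, abs_le]
        exact ⟨by linarith [(hu01 (X ω)).1], (hu01 (X ω)).2⟩
      have hintY : Integrable (fun ω => u (Y ω)) μ := by
        refine Integrable.mono' (integrable_const 1)
          ((hu.1.measurable.comp hY).aestronglyMeasurable) (ae_of_all _ fun ω => ?_)
        rw [Real.norm_eq_abs, abs_le]
        exact ⟨by linarith [(hu01 (Y ω)).1], (hu01 (Y ω)).2⟩
      have hssd := hS u hu id monotone_id (concaveOn_id convex_univ) hintX hintY
      simp only [id_eq] at hssd
      -- upper bound for ∫ u ∘ X
      have hupper : ∫ ω, u (X ω) ∂μ ≤ (μ {ω | x < X ω}).toReal := by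
        have hindint : Integrable ({ω | x < X ω}.indicator (fun _ => (1:ℝ))) μ :=
          (integrable_const 1).indicator (measurableSet_lt measurable_const hX)
        have hle : ∀ ω, u (X ω) ≤ {ω | x < X ω}.indicator (fun _ => (1:ℝ)) ω := by
          intro ω
          by_cases hω : x < X ω
          · rw [indicator_of_mem (show ω ∈ {ω | x < X ω} from hω)]
            exact (hu01 (X ω)).2
          · rw [indicator_of_notMem (show ω ∉ {ω | x < X ω} from hω)]
            push_neg at hω
            have : m * (X ω - x) ≤ 0 := by nlinarith
            simp only [hudef]
            rw [max_eq_right this, min_eq_left zero_le_one]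
        calc ∫ ω, u (X ω) ∂μ ≤ ∫ ω, {ω | x < X ω}.indicator (fun _ => (1:ℝ)) ω ∂μ :=
              integral_mono hintX hindint hle
          _ = (μ {ω | x < X ω}).toReal := by
              rw [integral_indicator_const (1:ℝ) (measurableSet_lt measurable_const hX), smul_eq_mul, mul_one, measureReal_def]
      -- lower bound for ∫ u ∘ Y
      have hlower : (μ {ω | x + 1/m ≤ Y ω}).toReal ≤ ∫ ω, u (Y ω) ∂μ := by
        have hmeas : MeasurableSet {ω | x + 1/m ≤ Y ω} := measurableSet_le measurable_const hY
        have hindint : Integrable ({ω | x + 1/m ≤ Y ω}.indicator (fun _ => (1:ℝ))) μ :=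
          (integrable_const 1).indicator hmeas
        have hle : ∀ ω, {ω | x + 1/m ≤ Y ω}.indicator (fun _ => (1:ℝ)) ω ≤ u (Y ω) := by
          intro ω
          by_cases hω : x + 1/m ≤ Y ω
          · rw [indicator_of_mem (show ω ∈ {ω | x + 1/m ≤ Y ω} from hω)]
            have h1m : (0:ℝ) < 1/m := by positivity
            have : (1:ℝ) ≤ m * (Y ω - x) := by
              have h2 : 1/m ≤ Y ω - x := by linarith
              calc (1:ℝ) = m * (1/m) := by field_simp
                _ ≤ m * (Y ω - x) := by nlinarith
            simp only [hudef]
            exact le_min (le_trans this (le_max_left _ _)) le_rfl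
          · rw [indicator_of_notMem (show ω ∉ {ω | x + 1/m ≤ Y ω} from hω)]
            exact (hu01 (Y ω)).1
        calc (μ {ω | x + 1/m ≤ Y ω}).toReal
            = ∫ ω, {ω | x + 1/m ≤ Y ω}.indicator (fun _ => (1:ℝ)) ω ∂μ := by
              rw [integral_indicator_const (1:ℝ) hmeas, smul_eq_mul, mul_one, measureReal_def]
          _ ≤ ∫ ω, u (Y ω) ∂μ := integral_mono hindint hintY hle
      have htr : (μ {ω | x + 1/m ≤ Y ω}).toReal ≤ (μ {ω | x < X ω}).toReal := by
        linarith
      exact (ENNReal.toReal_le_toReal (measure_ne_top μ _) (measure_ne_top μ _)).mp htr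
    have hYset : {ω | x < Y ω} = ⋃ n : ℕ, {ω | x + 1/((n:ℝ)+1) ≤ Y ω} := by
      ext ω
      simp only [mem_setOf_eq, mem_iUnion]
      constructor
      · intro hlt
        obtain ⟨n, hn⟩ := exists_nat_one_div_lt (show (0:ℝ) < Y ω - x by linarith)
        exact ⟨n, by linarith⟩
      · rintro ⟨n, hn⟩
        have : (0:ℝ) < 1/((n:ℝ)+1) := by positivity
        linarith
    have hmono : Monotone (fun n : ℕ => {ω | x + 1/((n:ℝ)+1) ≤ Y ω}) := by
      intro m n hmn ω hω
      simp only [mem_setOf_eq] at *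
      have h1 : (1:ℝ)/((n:ℝ)+1) ≤ 1/((m:ℝ)+1) := by
        apply one_div_le_one_div_of_le
        · positivity
        · exact_mod_cast by exact_mod_cast add_le_add_left (Nat.cast_le.mpr hmn) 1
      linarith
    have hYX : μ {ω | x < Y ω} ≤ μ {ω | x < X ω} := by
      rw [hYset, (hmono.directed_le).measure_iUnion]
      exact iSup_le key
    have eX : {ω | X ω ≤ x} = {ω | x < X ω}ᶜ := by ext ω; simp [not_lt]
    have eY : {ω | Y ω ≤ x} = {ω | x < Y ω}ᶜ := by ext ω; simp [not_lt]
    rw [eX, eY, measure_compl (measurableSet_lt measurable_const hX) (measure_ne_top μ _),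
      measure_compl (measurableSet_lt measurable_const hY) (measure_ne_top μ _)]
    exact tsub_le_tsub_left hYX _
end
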